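/- arXiv:1509.00071 — 2 statements merged into one kernel-verified Lean document; each statement's English description precedes it below -/
import Mathlib

section
/- Let a1 > 1, a2 > 1, θ ∈ ℝ. Suppose (u, v) is a pair of nonnegative C² functions on ℝ satisfying u'' + θ u' + u(1 − u − a1 v) = 0 and v'' + θ v' + v(1 − a2 u − v) = 0 on ℝ, with (u, v)(x) → (1, 0) as x → −∞ and (u, v)(x) → (0, 1) as x → +∞. Then 4/(a1 + a2 + 2) ≤ u(x) + v(x) ≤ 1 for every x ∈ ℝ. -/
open Filter Set Topology

/-!
Adding the two equations, `w = u + v` solves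
`w'' + θ w' + w (1 - w) - (a1 + a2 - 2) u v = 0` and tends to `1` at both ends, so if it leaves
`[4 / (a1 + a2 + 2), 1]` it attains a global extremum. At a maximum with `w > 1` the reaction term
is negative since `u v ≥ 0`, against `w'' ≤ 0`. At a minimum with `0 < w < 4 / (a1 + a2 + 2)`
it is positive since `u v ≤ w² / 4`, against `w'' ≥ 0`. That `w > 0` comes from `v > 0`: `v`
solves the linear equation `v'' + θ v' + (1 - a2 u - v) v = 0`, so by uniqueness a zero of `v`
(a minimum, hence with `v' = 0`) would force `v = 0` on a half-line, while `v → 1` at `+∞`.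
-/

theorem deriv_deriv_eq_zero_of_isLocalMax_of_isLocalMin {f : ℝ → ℝ} {x₀ : ℝ}
    (hmax : IsLocalMax f x₀) (hmin : IsLocalMin f x₀) : deriv (deriv f) x₀ = 0 := by
  have hconst : f =ᶠ[𝓝 x₀] fun _ => f x₀ := by
    filter_upwards [hmax, hmin] with y h₁ h₂ using le_antisymm h₁ h₂
  have hderiv : deriv f =ᶠ[𝓝 x₀] fun _ => 0 := by
    simpa using hconst.deriv
  simpa using hderiv.deriv_eq

theorem IsLocalMax.deriv_deriv_nonpos {f : ℝ → ℝ} {x₀ : ℝ} (h : IsLocalMax f x₀)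
    (hc : ContinuousAt f x₀) : deriv (deriv f) x₀ ≤ 0 := by
  by_contra! hpos
  exact hpos.ne' <| deriv_deriv_eq_zero_of_isLocalMax_of_isLocalMin h
    (isLocalMin_of_deriv_deriv_pos hpos h.deriv_eq_zero hc)

theorem IsLocalMin.deriv_deriv_nonneg {f : ℝ → ℝ} {x₀ : ℝ} (h : IsLocalMin f x₀)
    (hc : ContinuousAt f x₀) : 0 ≤ deriv (deriv f) x₀ := by
  by_contra! hneg
  exact hneg.ne <| deriv_deriv_eq_zero_of_isLocalMax_of_isLocalMin
    (isLocalMax_of_deriv_deriv_neg hneg h.deriv_eq_zero hc) h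

/-- Grönwall for `(y, y')` on `[x₀, x]`, where `b` and `c` are bounded. -/
theorem eq_zero_of_linear_ode2_of_eq_zero {y b c : ℝ → ℝ} {x₀ : ℝ} (hy : ContDiff ℝ 2 y)
    (hb : Continuous b) (hc : Continuous c)
    (heq : ∀ x, deriv (deriv y) x + b x * deriv y x + c x * y x = 0)
    (h₀ : y x₀ = 0) (h₀' : deriv y x₀ = 0) : ∀ x, x₀ ≤ x → y x = 0 := by
  intro x hx
  obtain ⟨B, hB⟩ := isCompact_Icc.exists_bound_of_continuousOn (s := Icc x₀ x) hb.continuousOn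
  obtain ⟨C, hC⟩ := isCompact_Icc.exists_bound_of_continuousOn (s := Icc x₀ x) hc.continuousOn
  set Y : ℝ → ℝ × ℝ := fun t => (y t, deriv y t)
  have hY : ∀ t, HasDerivAt Y (deriv y t, deriv (deriv y) t) t := fun t =>
    ((hy.differentiable two_ne_zero t).hasDerivAt).prodMk
      (hy.differentiable_deriv_two t).hasDerivAt
  have hbound : ∀ t ∈ Ico x₀ x, ‖(deriv y t, deriv (deriv y) t)‖ ≤ (1 + B + C) * ‖Y t‖ := by
    intro t ht
    have hbt := hB t (Ico_subset_Icc_self ht)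
    have hct := hC t (Ico_subset_Icc_self ht)
    simp only [Y, Prod.norm_def, Real.norm_eq_abs] at hbt hct ⊢
    set M := max |y t| |deriv y t|
    have hyM : |y t| ≤ M := le_max_left _ _
    have hy'M : |deriv y t| ≤ M := le_max_right _ _
    have hy'' : |deriv (deriv y) t| ≤ B * M + C * M := by
      calc |deriv (deriv y) t| = |b t * deriv y t + c t * y t| := by
            rw [← abs_neg]; congr 1; linarith [heq t]
        _ ≤ |b t| * |deriv y t| + |c t| * |y t| := by
            simpa only [abs_mul] using abs_add_le (b t * deriv y t) (c t * y t)
        _ ≤ B * M + C * M := by gcongr <;> linarith [abs_nonneg (b t), abs_nonneg (c t)]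
    have hM : 0 ≤ M := (abs_nonneg _).trans hyM
    have hB0 : 0 ≤ B := (abs_nonneg _).trans hbt
    have hC0 : 0 ≤ C := (abs_nonneg _).trans hct
    exact max_le (by nlinarith) (by nlinarith)
  have := eq_zero_of_abs_deriv_le_mul_abs_self_of_eq_zero_right
    (fun t _ => (hY t).continuousAt.continuousWithinAt) (fun t _ => (hY t).hasDerivWithinAt)
    (by simp [Y, h₀, h₀']) hbound x ⟨hx, le_rfl⟩
  exact congrArg Prod.fst this

theorem pos_of_linear_ode2_of_nonneg {y b c : ℝ → ℝ} (hy : ContDiff ℝ 2 y)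
    (hb : Continuous b) (hc : Continuous c)
    (heq : ∀ x, deriv (deriv y) x + b x * deriv y x + c x * y x = 0)
    (hy0 : ∀ x, 0 ≤ y x) (hne : ∃ᶠ x in atTop, y x ≠ 0) : ∀ x, 0 < y x := by
  intro x₀
  by_contra! hle
  have hzero : y x₀ = 0 := le_antisymm hle (hy0 x₀)
  have hmin : IsLocalMin y x₀ := Eventually.of_forall fun x => hzero ▸ hy0 x
  have hright := eq_zero_of_linear_ode2_of_eq_zero hy hb hc heq hzero hmin.deriv_eq_zero
  exact hne ((eventually_ge_atTop x₀).mono fun x hx hne_x => hne_x (hright x hx))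

namespace LotkaVolterra

def IsSolution (a1 a2 θ : ℝ) (u v : ℝ → ℝ) : Prop :=
  (∀ x, deriv (deriv u) x + θ * deriv u x + u x * (1 - u x - a1 * v x) = 0) ∧
    ∀ x, deriv (deriv v) x + θ * deriv v x + v x * (1 - a2 * u x - v x) = 0

variable {a1 a2 θ : ℝ} {u v : ℝ → ℝ}

theorem add_ode (hu : ContDiff ℝ 2 u) (hv : ContDiff ℝ 2 v) (h : IsSolution a1 a2 θ u v)
    (x : ℝ) :
    deriv (deriv (u + v)) x + θ * deriv (u + v) x
      + ((u x + v x) * (1 - (u x + v x)) - (a1 + a2 - 2) * (u x * v x)) = 0 := by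
  have hderiv : deriv (u + v) = deriv u + deriv v :=
    funext fun x => deriv_add (hu.differentiable two_ne_zero x) (hv.differentiable two_ne_zero x)
  rw [hderiv, deriv_add (hu.differentiable_deriv_two x) (hv.differentiable_deriv_two x)]
  simp only [Pi.add_apply]
  linear_combination h.1 x + h.2 x

theorem add_le_one (ha : 2 ≤ a1 + a2) (hu : ContDiff ℝ 2 u) (hv : ContDiff ℝ 2 v)
    (hu0 : ∀ x, 0 ≤ u x) (hv0 : ∀ x, 0 ≤ v x) (h : IsSolution a1 a2 θ u v)
    (hbot : Tendsto (u + v) atBot (𝓝 1)) (htop : Tendsto (u + v) atTop (𝓝 1)) (x : ℝ) :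
    u x + v x ≤ 1 := by
  by_contra! hx
  have hcont : Continuous (u + v) := hu.continuous.add hv.continuous
  obtain ⟨x₀, hx₀⟩ := hcont.exists_forall_ge' x <| by
    rw [cocompact_eq_atBot_atTop]
    exact (hbot.sup htop).eventually (eventually_le_nhds hx)
  have hmax : IsLocalMax (u + v) x₀ := Eventually.of_forall hx₀
  have hode := add_ode hu hv h x₀
  rw [hmax.deriv_eq_zero] at hode
  have hx₀x : u x + v x ≤ u x₀ + v x₀ := hx₀ x
  nlinarith [hmax.deriv_deriv_nonpos hcont.continuousAt, mul_nonneg (hu0 x₀) (hv0 x₀)]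

theorem four_div_le_add (ha : 2 ≤ a1 + a2) (hu : ContDiff ℝ 2 u) (hv : ContDiff ℝ 2 v)
    (hu0 : ∀ x, 0 ≤ u x) (hv0 : ∀ x, 0 < v x) (h : IsSolution a1 a2 θ u v)
    (hbot : Tendsto (u + v) atBot (𝓝 1)) (htop : Tendsto (u + v) atTop (𝓝 1)) (x : ℝ) :
    4 / (a1 + a2 + 2) ≤ u x + v x := by
  by_contra! hx
  have hcont : Continuous (u + v) := hu.continuous.add hv.continuous
  have hlt : u x + v x < 1 := hx.trans_le <| by rw [div_le_one (by linarith)]; linarith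
  obtain ⟨x₀, hx₀⟩ := hcont.exists_forall_le' x <| by
    rw [cocompact_eq_atBot_atTop]
    exact (hbot.sup htop).eventually (eventually_ge_nhds hlt)
  have hmin : IsLocalMin (u + v) x₀ := Eventually.of_forall hx₀
  have hode := add_ode hu hv h x₀
  rw [hmin.deriv_eq_zero] at hode
  set w₀ := u x₀ + v x₀
  have hw₀ : 0 < w₀ := add_pos_of_nonneg_of_pos (hu0 x₀) (hv0 x₀)
  have hreact : w₀ * (1 - w₀) ≤ (a1 + a2 - 2) * (w₀ ^ 2 / 4) := calc
    w₀ * (1 - w₀) ≤ (a1 + a2 - 2) * (u x₀ * v x₀) := by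
      linarith [hmin.deriv_deriv_nonneg hcont.continuousAt]
    _ ≤ (a1 + a2 - 2) * (w₀ ^ 2 / 4) := by
      gcongr
      nlinarith [sq_nonneg (u x₀ - v x₀)]
  have hw₀_ge : 4 ≤ (a1 + a2 + 2) * w₀ := by nlinarith
  have hw₀_le : (a1 + a2 + 2) * w₀ ≤ (a1 + a2 + 2) * (u x + v x) :=
    mul_le_mul_of_nonneg_left (hx₀ x) (by linarith)
  rw [lt_div_iff₀ (by linarith)] at hx
  linarith

end LotkaVolterra

/-- Sharper bounds for `u + v` in the scaled Lotka-Volterra system with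
`d = k = 1` under the bistable condition. -/
theorem lv_sharper_bounds_u_plus_v
    (a1 a2 θ : ℝ) (ha1 : 1 < a1) (ha2 : 1 < a2)
    (u v : ℝ → ℝ)
    (hu : ContDiff ℝ 2 u) (hv : ContDiff ℝ 2 v)
    (hu0 : ∀ x, 0 ≤ u x) (hv0 : ∀ x, 0 ≤ v x)
    (hequ : ∀ x, deriv (deriv u) x + θ * deriv u x
      + u x * (1 - u x - a1 * v x) = 0)
    (heqv : ∀ x, deriv (deriv v) x + θ * deriv v x
      + v x * (1 - a2 * u x - v x) = 0)
    (huM : Tendsto u atBot (nhds 1)) (hvM : Tendsto v atBot (nhds 0))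
    (huP : Tendsto u atTop (nhds 0)) (hvP : Tendsto v atTop (nhds 1)) :
    ∀ x : ℝ, 4 / (a1 + a2 + 2) ≤ u x + v x ∧ u x + v x ≤ 1 := by
  have ha : 2 ≤ a1 + a2 := by linarith
  have hsol : LotkaVolterra.IsSolution a1 a2 θ u v := ⟨hequ, heqv⟩
  have hbot : Tendsto (u + v) atBot (𝓝 1) := by
    rw [← add_zero (1 : ℝ)]; exact huM.add hvM
  have htop : Tendsto (u + v) atTop (𝓝 1) := by
    rw [← zero_add (1 : ℝ)]; exact huP.add hvP
  have hv_pos : ∀ x, 0 < v x :=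
    pos_of_linear_ode2_of_nonneg (b := fun _ => θ) (c := fun x => 1 - a2 * u x - v x) hv
      continuous_const (by fun_prop) (fun x => by linear_combination heqv x) hv0
      (hvP.eventually (eventually_ne_nhds one_ne_zero)).frequently
  exact fun x => ⟨LotkaVolterra.four_div_le_add ha hu hv hu0 hv_pos hsol hbot htop x,
    LotkaVolterra.add_le_one ha hu hv hu0 hv0 hsol hbot htop x⟩
end

section
/- Let d1, d2, σ1, σ2 and c11, c12, c21, c22 be positive constants satisfying the bistable condition σ1/c11 > σ2/c21 and σ2/c22 > σ1/c12, let θ ∈ ℝ, and let α > 0, β > 0 be arbitrary constants. Suppose (u, v) is a pair of nonnegative C² functions on ℝ satisfying the differential inequalities d1 u'' + θ u' + u(σ1 − c11 u − c12 v) ≤ 0 and d2 v'' + θ v' + v(σ2 − c21 u − c22 v) ≤ 0 on ℝ, with (u,v)(x) → (σ1/c11, 0) as x → −∞ and (u,v)(x) → (0, σ2/c22) as x → +∞. Then q(x) = d1 α u(x) + d2 β v(x) satisfies q(x) ≥ min[α σ2/(c21 d2), β σ1/(c12 d1)] · min[d1², d2²] for every x ∈ ℝ. -/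
/-!
Put `p = α u + β v` and `c = min (d1 α σ2 / c21) (d2 β σ1 / c12)`. Where `q ≤ c`, the point
`(u, v)` lies below the chord joining `(σ2 / c21, 0)` and `(0, σ1 / c12)`, where by [BiS] both
reaction terms are nonnegative; adding `α` times the first inequality to `β` times the second
shows that `Q = q' + θ p` is nonincreasing there. If `q` went below the bound, start at its global
minimum `z` (so `q' z = 0`) and move in the direction of `sign θ` to the first point `y` with
`q y = c`. Comparing `Q` at `z` and `y`, with `q'` of the right sign at `y`, gives `p y ≤ p z`
(for `θ = 0`, `q` itself decreases and never reaches `c`). This contradicts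
`min d1 d2 * p ≤ q ≤ max d1 d2 * p`, since the bound times `max d1 d2` is `c * min d1 d2`.
-/

open Filter Set Topology

theorem HasDerivAt.nonneg_of_forall_Icc_le {f : ℝ → ℝ} {f' a b : ℝ} (hf : HasDerivAt f f' b)
    (hab : a < b) (hmax : ∀ x ∈ Icc a b, f x ≤ f b) : 0 ≤ f' := by
  have hcone : a - b ∈ posTangentConeAt (Icc a b) b :=
    sub_mem_posTangentConeAt_of_segment_subset (by rw [segment_symm, segment_eq_Icc hab.le])
  have hneg := IsMaxOn.localize (f := f) hmax |>.hasFDerivWithinAt_nonpos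
    hf.hasFDerivAt.hasFDerivWithinAt hcone
  simp only [ContinuousLinearMap.toSpanSingleton_apply, smul_eq_mul] at hneg
  nlinarith

theorem Continuous.exists_gt_eq_forall_Icc_le {f : ℝ → ℝ} {a c : ℝ} (hf : Continuous f)
    (ha : f a < c) (htop : ∀ᶠ x in atTop, c < f x) :
    ∃ b, a < b ∧ f b = c ∧ ∀ x ∈ Icc a b, f x ≤ c := by
  obtain ⟨B, hB⟩ := htop.exists_forall_of_atTop
  have hS : IsClosed {x | a ≤ x ∧ c ≤ f x} :=
    isClosed_Ici.inter (isClosed_le continuous_const hf)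
  have hne : {x | a ≤ x ∧ c ≤ f x}.Nonempty :=
    ⟨max a B, le_max_left _ _, (hB _ (le_max_right _ _)).le⟩
  have hbdd : BddBelow {x | a ≤ x ∧ c ≤ f x} := ⟨a, fun x hx => hx.1⟩
  obtain ⟨hab, hcb⟩ := hS.csInf_mem hne hbdd
  set b := sInf {x | a ≤ x ∧ c ≤ f x}
  have hlt : a < b := lt_of_le_of_ne hab fun h => hcb.not_gt (h ▸ ha)
  have hIcc : Icc a b ⊆ {x | f x ≤ c} := by
    rw [← closure_Ico hlt.ne]
    exact (isClosed_le hf continuous_const).closure_subset_iff.2 fun x hx =>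
      le_of_not_ge fun h => (csInf_le hbdd ⟨hx.1, h⟩).not_gt hx.2
  exact ⟨b, hlt, le_antisymm (hIcc ⟨hab, le_rfl⟩) hcb, hIcc⟩

theorem HasDerivAt.comp_neg {f : ℝ → ℝ} {f' x : ℝ} (hf : HasDerivAt f f' (-x)) :
    HasDerivAt (fun x => f (-x)) (-f') x := by
  simpa [Function.comp_def] using hf.comp x (hasDerivAt_neg' x)

section SublevelSupersolution

variable {q q' q'' p p' : ℝ → ℝ} {θ c : ℝ}

theorem antitoneOn_deriv_add_mul_of_forall_le (hq' : ∀ x, HasDerivAt q' (q'' x) x)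
    (hp : ∀ x, HasDerivAt p (p' x) x) (hsub : ∀ x, q x ≤ c → q'' x + θ * p' x ≤ 0)
    {a b : ℝ} (hab : ∀ x ∈ Icc a b, q x ≤ c) :
    AntitoneOn (fun x => q' x + θ * p x) (Icc a b) := by
  have hQ : ∀ x, HasDerivAt (fun x => q' x + θ * p x) (q'' x + θ * p' x) x := fun x =>
    (hq' x).add ((hp x).const_mul θ)
  refine antitoneOn_of_hasDerivWithinAt_nonpos (convex_Icc a b)
    (fun x _ => (hQ x).continuousAt.continuousWithinAt) (fun x _ => (hQ x).hasDerivWithinAt)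
    fun x hx => hsub x (hab x (interior_subset hx))

theorem exists_eq_le_of_speed_nonneg (hq : ∀ x, HasDerivAt q (q' x) x)
    (hq' : ∀ x, HasDerivAt q' (q'' x) x) (hp : ∀ x, HasDerivAt p (p' x) x)
    (hsub : ∀ x, q x ≤ c → q'' x + θ * p' x ≤ 0) (hθ : 0 ≤ θ) {z : ℝ} (hz : q' z = 0)
    (hqz : q z < c) (htop : ∀ᶠ x in atTop, c < q x) :
    ∃ y, q y = c ∧ p y ≤ p z := by
  have hqc : Continuous q := continuous_iff_continuousAt.2 fun x => (hq x).continuousAt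
  obtain ⟨b, hzb, hqb, hle⟩ := hqc.exists_gt_eq_forall_Icc_le hqz htop
  have hanti := antitoneOn_deriv_add_mul_of_forall_le hq' hp hsub hle
  have hQ : ∀ x ∈ Icc z b, q' x + θ * p x ≤ θ * p z := fun x hx => by
    simpa [hz] using hanti (left_mem_Icc.2 hzb.le) hx hx.1
  rcases hθ.eq_or_lt with rfl | hθ
  · have hq_anti : AntitoneOn q (Icc z b) :=
      antitoneOn_of_hasDerivWithinAt_nonpos (convex_Icc z b)
        (fun x _ => (hq x).continuousAt.continuousWithinAt) (fun x _ => (hq x).hasDerivWithinAt)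
        fun x hx => by simpa using hQ x (interior_subset hx)
    have := hq_anti (left_mem_Icc.2 hzb.le) (right_mem_Icc.2 hzb.le) hzb.le
    linarith
  · have hq'b : 0 ≤ q' b := (hq b).nonneg_of_forall_Icc_le hzb fun x hx => hqb ▸ hle x hx
    refine ⟨b, hqb, le_of_mul_le_mul_left ?_ hθ⟩
    linarith [hQ b (right_mem_Icc.2 hzb.le)]

theorem exists_eq_le_of_speed_nonpos (hq : ∀ x, HasDerivAt q (q' x) x)
    (hq' : ∀ x, HasDerivAt q' (q'' x) x) (hp : ∀ x, HasDerivAt p (p' x) x)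
    (hsub : ∀ x, q x ≤ c → q'' x + θ * p' x ≤ 0) (hθ : θ ≤ 0) {z : ℝ} (hz : q' z = 0)
    (hqz : q z < c) (hbot : ∀ᶠ x in atBot, c < q x) :
    ∃ y, q y = c ∧ p y ≤ p z := by
  obtain ⟨y, hy⟩ := exists_eq_le_of_speed_nonneg (q := fun x => q (-x))
    (q' := fun x => -q' (-x)) (q'' := fun x => q'' (-x)) (p := fun x => p (-x))
    (p' := fun x => -p' (-x)) (θ := -θ)
    (fun x => (hq (-x)).comp_neg) (fun x => by simpa using (hq' (-x)).comp_neg.fun_neg)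
    (fun x => (hp (-x)).comp_neg) (fun x hx => by simpa using hsub (-x) hx) (neg_nonneg.2 hθ)
    (z := -z) (by simpa using hz) (by simpa using hqz) (tendsto_neg_atTop_atBot.eventually hbot)
  exact ⟨-y, by simpa using hy⟩

theorem le_of_sublevel_supersolution (hq : ∀ x, HasDerivAt q (q' x) x)
    (hq' : ∀ x, HasDerivAt q' (q'' x) x) (hp : ∀ x, HasDerivAt p (p' x) x)
    (hsub : ∀ x, q x ≤ c → q'' x + θ * p' x ≤ 0) {μ m M : ℝ} (hm : 0 < m) (hM : 0 < M)
    (hpq : ∀ x, m * p x ≤ q x) (hqp : ∀ x, q x ≤ M * p x) (hμ : μ * M ≤ c * m)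
    (hμc : μ ≤ c) (hbot : ∀ᶠ x in atBot, c < q x) (htop : ∀ᶠ x in atTop, c < q x)
    (x : ℝ) :
    μ ≤ q x := by
  by_contra! hx
  have hqc : Continuous q := continuous_iff_continuousAt.2 fun x => (hq x).continuousAt
  obtain ⟨z, hz⟩ := hqc.exists_forall_le' x <| by
    rw [cocompact_eq_atBot_atTop, eventually_sup]
    exact ⟨hbot.mono fun y hy => by linarith, htop.mono fun y hy => by linarith⟩
  have hz' : q' z = 0 := IsLocalMin.hasDerivAt_eq_zero (Eventually.of_forall hz) (hq z)
  have hqz : q z < μ := (hz x).trans_lt hx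
  obtain ⟨y, hqy, hpy⟩ := (le_total 0 θ).elim
    (fun hθ => exists_eq_le_of_speed_nonneg hq hq' hp hsub hθ hz' (by linarith) htop)
    (fun hθ => exists_eq_le_of_speed_nonpos hq hq' hp hsub hθ hz' (by linarith) hbot)
  -- `M m p(z) ≤ M q(z) < M μ ≤ m c = m q(y) ≤ m M p(y) ≤ m M p(z)`
  nlinarith [mul_le_mul_of_nonneg_left (hpq z) hM.le, mul_lt_mul_of_pos_left hqz hM,
    mul_le_mul_of_nonneg_left (hqp y) hm.le, mul_le_mul_of_nonneg_left hpy (mul_pos hm hM).le]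

end SublevelSupersolution

theorem min_mul_add_le {d1 d2 a b : ℝ} (ha : 0 ≤ a) (hb : 0 ≤ b) :
    min d1 d2 * (a + b) ≤ d1 * a + d2 * b := by
  nlinarith [mul_le_mul_of_nonneg_right (min_le_left d1 d2) ha,
    mul_le_mul_of_nonneg_right (min_le_right d1 d2) hb]

theorem mul_add_le_max_mul {d1 d2 a b : ℝ} (ha : 0 ≤ a) (hb : 0 ≤ b) :
    d1 * a + d2 * b ≤ max d1 d2 * (a + b) := by
  nlinarith [mul_le_mul_of_nonneg_right (le_max_left d1 d2) ha,
    mul_le_mul_of_nonneg_right (le_max_right d1 d2) hb]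

theorem min_div_mul_min_sq_mul_max {d1 d2 : ℝ} (hd1 : 0 < d1) (hd2 : 0 < d2) (A B : ℝ) :
    min (A / d2) (B / d1) * min (d1 ^ 2) (d2 ^ 2) * max d1 d2
      = min (d1 * A) (d2 * B) * min d1 d2 := by
  rcases le_total d1 d2 with hd | hd
  · rw [min_eq_left (pow_le_pow_left₀ hd1.le hd 2), max_eq_right hd, min_eq_left hd,
      min_mul_of_nonneg _ _ (by positivity), min_mul_of_nonneg _ _ hd2.le,
      min_mul_of_nonneg _ _ hd1.le]
    congr 1 <;> field_simp
  · rw [min_eq_right (pow_le_pow_left₀ hd2.le hd 2), max_eq_left hd, min_eq_right hd,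
      min_mul_of_nonneg _ _ (by positivity), min_mul_of_nonneg _ _ hd1.le,
      min_mul_of_nonneg _ _ hd2.le]
    congr 1 <;> field_simp

theorem div_add_div_le_one_of_add_le_min {a b x y X Y : ℝ} (ha : 0 < a) (hb : 0 < b)
    (hX : 0 < X) (hY : 0 < Y) (hx : 0 ≤ x) (hy : 0 ≤ y)
    (h : a * x + b * y ≤ min (a * X) (b * Y)) : x / X + y / Y ≤ 1 := by
  have hc : 0 < min (a * X) (b * Y) := lt_min (by positivity) (by positivity)
  calc x / X + y / Y = a * x / (a * X) + b * y / (b * Y) := by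
        rw [mul_div_mul_left _ _ ha.ne', mul_div_mul_left _ _ hb.ne']
    _ ≤ a * x / min (a * X) (b * Y) + b * y / min (a * X) (b * Y) := by
        gcongr
        exacts [min_le_left _ _, min_le_right _ _]
    _ ≤ 1 := by rw [← add_div, div_le_one hc]; exact h

theorem sub_nonneg_of_div_add_div_le_one {σ c1 c2 u v : ℝ} (hσ : 0 < σ)
    (h : u / (σ / c1) + v / (σ / c2) ≤ 1) : 0 ≤ σ - c1 * u - c2 * v := by
  rw [div_div_eq_mul_div, div_div_eq_mul_div, ← add_div, div_le_one hσ] at h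
  linarith

theorem lv_reaction_nonneg_of_le {d1 d2 α β σ1 σ2 c11 c12 c21 c22 u v : ℝ}
    (hd1 : 0 < d1) (hd2 : 0 < d2) (hα : 0 < α) (hβ : 0 < β) (hσ1 : 0 < σ1) (hσ2 : 0 < σ2)
    (hc12 : 0 < c12) (hc21 : 0 < c21)
    (hBiS1 : σ2 / c21 ≤ σ1 / c11) (hBiS2 : σ1 / c12 ≤ σ2 / c22)
    (hu : 0 ≤ u) (hv : 0 ≤ v)
    (h : d1 * α * u + d2 * β * v ≤ min (d1 * α * (σ2 / c21)) (d2 * β * (σ1 / c12))) :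
    0 ≤ σ1 - c11 * u - c12 * v ∧ 0 ≤ σ2 - c21 * u - c22 * v := by
  have hchord : u / (σ2 / c21) + v / (σ1 / c12) ≤ 1 :=
    div_add_div_le_one_of_add_le_min (by positivity) (by positivity) (by positivity)
      (by positivity) hu hv h
  constructor
  · refine sub_nonneg_of_div_add_div_le_one hσ1 (le_trans ?_ hchord)
    gcongr
  · refine sub_nonneg_of_div_add_div_le_one hσ2 (le_trans ?_ hchord)
    gcongr

theorem lv_unscaled_lower_bound_q_general
    (d1 d2 σ1 σ2 c11 c12 c21 c22 θ α β : ℝ)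
    (hd1 : 0 < d1) (hd2 : 0 < d2) (hσ1 : 0 < σ1) (hσ2 : 0 < σ2)
    (hc12 : 0 < c12) (hc21 : 0 < c21)
    (hBiS1 : σ1 / c11 > σ2 / c21) (hBiS2 : σ2 / c22 > σ1 / c12)
    (hα : 0 < α) (hβ : 0 < β)
    (u v : ℝ → ℝ)
    (hu : ContDiff ℝ 2 u) (hv : ContDiff ℝ 2 v)
    (hu0 : ∀ x, 0 ≤ u x) (hv0 : ∀ x, 0 ≤ v x)
    (hequ : ∀ x, d1 * deriv (deriv u) x + θ * deriv u x
      + u x * (σ1 - c11 * u x - c12 * v x) ≤ 0)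
    (heqv : ∀ x, d2 * deriv (deriv v) x + θ * deriv v x
      + v x * (σ2 - c21 * u x - c22 * v x) ≤ 0)
    (huM : Tendsto u atBot (nhds (σ1 / c11))) (hvM : Tendsto v atBot (nhds 0))
    (huP : Tendsto u atTop (nhds 0)) (hvP : Tendsto v atTop (nhds (σ2 / c22))) :
    ∀ x : ℝ,
      min (α * σ2 / (c21 * d2)) (β * σ1 / (c12 * d1)) * min (d1 ^ 2) (d2 ^ 2)
        ≤ d1 * α * u x + d2 * β * v x := by
  set c := min (d1 * α * (σ2 / c21)) (d2 * β * (σ1 / c12))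
  have hc : 0 < c := lt_min (by positivity) (by positivity)
  have hM : 0 < max d1 d2 := hd1.trans_le (le_max_left _ _)
  have hbound : min (α * σ2 / (c21 * d2)) (β * σ1 / (c12 * d1)) * min (d1 ^ 2) (d2 ^ 2)
      * max d1 d2 = c * min d1 d2 := by
    rw [← div_div, ← div_div, min_div_mul_min_sq_mul_max hd1 hd2]
    simp only [c, mul_div_assoc, mul_assoc]
  have hu' (x : ℝ) := (hu.differentiable two_ne_zero x).hasDerivAt
  have hv' (x : ℝ) := (hv.differentiable two_ne_zero x).hasDerivAt
  have hu'' (x : ℝ) := (hu.differentiable_deriv_two x).hasDerivAt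
  have hv'' (x : ℝ) := (hv.differentiable_deriv_two x).hasDerivAt
  have hαu (x : ℝ) : 0 ≤ α * u x := mul_nonneg hα.le (hu0 x)
  have hβv (x : ℝ) : 0 ≤ β * v x := mul_nonneg hβ.le (hv0 x)
  refine le_of_sublevel_supersolution (c := c) (θ := θ)
    (q := fun x => d1 * α * u x + d2 * β * v x) (p := fun x => α * u x + β * v x)
    (q'' := fun x => d1 * α * deriv (deriv u) x + d2 * β * deriv (deriv v) x)
    (fun x => ((hu' x).const_mul _).fun_add ((hv' x).const_mul _))
    (fun x => ((hu'' x).const_mul _).fun_add ((hv'' x).const_mul _))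
    (fun x => ((hu' x).const_mul _).fun_add ((hv' x).const_mul _))
    (fun x hx => ?sub) (lt_min hd1 hd2) hM
    (fun x => by simpa only [mul_assoc] using min_mul_add_le (hαu x) (hβv x))
    (fun x => by simpa only [mul_assoc] using mul_add_le_max_mul (hαu x) (hβv x))
    hbound.le ?below ?bot ?top
  case sub =>
    obtain ⟨h1, h2⟩ := lv_reaction_nonneg_of_le hd1 hd2 hα hβ hσ1 hσ2 hc12 hc21 hBiS1.le
      hBiS2.le (hu0 x) (hv0 x) hx
    nlinarith [mul_le_mul_of_nonneg_left (hequ x) hα.le, mul_le_mul_of_nonneg_left (heqv x) hβ.le,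
      mul_nonneg (hαu x) h1, mul_nonneg (hβv x) h2]
  case below =>
    exact le_of_mul_le_mul_right (hbound.trans_le (mul_le_mul_of_nonneg_left min_le_max hc.le)) hM
  case bot =>
    refine ((huM.const_mul (d1 * α)).add (hvM.const_mul (d2 * β))).eventually
      (eventually_gt_nhds ?_)
    simpa only [mul_zero, add_zero] using (min_le_left _ _).trans_lt (by gcongr)
  case top =>
    refine ((huP.const_mul (d1 * α)).add (hvP.const_mul (d2 * β))).eventually
      (eventually_gt_nhds ?_)
    simpa only [mul_zero, zero_add] using (min_le_right _ _).trans_lt (by gcongr)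

/-- Lower bound for `q(x) = d1 α u(x) + d2 β v(x)` for the unscaled two-species
Lotka-Volterra system under the bistable condition [BiS]. -/
theorem lv_unscaled_lower_bound_q
    (d1 d2 σ1 σ2 c11 c12 c21 c22 θ α β : ℝ)
    (hd1 : 0 < d1) (hd2 : 0 < d2) (hσ1 : 0 < σ1) (hσ2 : 0 < σ2)
    (hc11 : 0 < c11) (hc12 : 0 < c12) (hc21 : 0 < c21) (hc22 : 0 < c22)
    (hBiS1 : σ1 / c11 > σ2 / c21) (hBiS2 : σ2 / c22 > σ1 / c12)
    (hα : 0 < α) (hβ : 0 < β)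
    (u v : ℝ → ℝ)
    (hu : ContDiff ℝ 2 u) (hv : ContDiff ℝ 2 v)
    (hu0 : ∀ x, 0 ≤ u x) (hv0 : ∀ x, 0 ≤ v x)
    (hequ : ∀ x, d1 * deriv (deriv u) x + θ * deriv u x
      + u x * (σ1 - c11 * u x - c12 * v x) ≤ 0)
    (heqv : ∀ x, d2 * deriv (deriv v) x + θ * deriv v x
      + v x * (σ2 - c21 * u x - c22 * v x) ≤ 0)
    (huM : Tendsto u atBot (nhds (σ1 / c11))) (hvM : Tendsto v atBot (nhds 0))
    (huP : Tendsto u atTop (nhds 0)) (hvP : Tendsto v atTop (nhds (σ2 / c22))) :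
    ∀ x : ℝ,
      min (α * σ2 / (c21 * d2)) (β * σ1 / (c12 * d1)) * min (d1 ^ 2) (d2 ^ 2)
        ≤ d1 * α * u x + d2 * β * v x :=
  lv_unscaled_lower_bound_q_general d1 d2 σ1 σ2 c11 c12 c21 c22 θ α β hd1 hd2 hσ1 hσ2 hc12 hc21
    hBiS1 hBiS2 hα hβ u v hu hv hu0 hv0 hequ heqv huM hvM huP hvP
end
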